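/- arXiv:1607.02392 — 4 statements merged into one kernel-verified Lean document; each statement's English description precedes it below -/
import Mathlib

section
/- Let g : ℂ → [0,∞) be measurable and let δ > 0 be such that c(λ) := ∫ 1_{|x|≤δ} g(x)^{−λ} dℓ_ℂ(x) < ∞ for every λ > 0. Then for every K > 0 and ε > 0 there exists n₀ ∈ ℕ such that for all n > n₀, ∫_{ℂ^{n+1}} 1{∏_{k=0}^n g(a_k) ≤ e^{−εn²}} · 1{max_{0≤k≤n} |a_k| < δ} dℓ_{ℂ^{n+1}}(a_0,…,a_n) ≤ e^{−Kn²}. -/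
/-! On the set in question `∏ₖ g(aₖ)^(-l) ≥ exp(l ε n²)`, so Markov's inequality and Tonelli
bound its measure by `exp(-l ε n²) c(l)^(n+1)`. With `l = (K + 1) / ε` this is
`exp(-(K + 1) n²) c(l)^(n+1)`, which is at most `exp(-K n²)` as soon as `n²` dominates
`(n + 1) log c(l)`. -/

open MeasureTheory Filter
open scoped ENNReal

theorem ENNReal.prod_ofReal_le_ofReal_prod {ι : Type*} (s : Finset ι) (f : ι → ℝ) :
    ∏ i ∈ s, ENNReal.ofReal (f i) ≤ ENNReal.ofReal (∏ i ∈ s, f i) := by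
  by_cases h : ∀ i ∈ s, 0 ≤ f i
  · rw [ENNReal.ofReal_prod_of_nonneg h]
  · push Not at h
    obtain ⟨i, hi, hneg⟩ := h
    rw [Finset.prod_eq_zero hi (ENNReal.ofReal_of_nonpos hneg.le)]
    exact bot_le

theorem Real.eventually_pow_succ_le_exp_sq {M : ℝ} (hM : 0 ≤ M) :
    ∀ᶠ n : ℕ in atTop, M ^ (n + 1) ≤ Real.exp ((n : ℝ) ^ 2) := by
  set m := ⌈M⌉₊
  have hMm : M ≤ Real.exp m := (Nat.le_ceil M).trans <| by linarith [Real.add_one_le_exp (m : ℝ)]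
  filter_upwards [eventually_ge_atTop (m + 1)] with n hn
  have hn' : (m : ℝ) + 1 ≤ n := by exact_mod_cast hn
  calc M ^ (n + 1) ≤ Real.exp m ^ (n + 1) := pow_le_pow_left₀ hM hMm _
    _ = Real.exp ((n + 1 : ℕ) * m) := by rw [Real.exp_nat_mul]
    _ ≤ Real.exp ((n : ℝ) ^ 2) := Real.exp_le_exp.2 <| by push_cast; nlinarith

theorem ENNReal.eventually_ofReal_exp_mul_pow_le {C : ℝ≥0∞} (hC : C ≠ ⊤) (K : ℝ) :
    ∀ᶠ n : ℕ in atTop, ENNReal.ofReal (Real.exp (-(K + 1) * (n : ℝ) ^ 2)) * C ^ (n + 1)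
      ≤ ENNReal.ofReal (Real.exp (-K * (n : ℝ) ^ 2)) := by
  filter_upwards [Real.eventually_pow_succ_le_exp_sq ENNReal.toReal_nonneg (M := C.toReal)]
    with n hn
  rw [← ENNReal.ofReal_toReal hC, ← ENNReal.ofReal_pow ENNReal.toReal_nonneg,
    ← ENNReal.ofReal_mul (Real.exp_pos _).le]
  refine ENNReal.ofReal_le_ofReal ?_
  calc Real.exp (-(K + 1) * (n : ℝ) ^ 2) * C.toReal ^ (n + 1)
      ≤ Real.exp (-(K + 1) * (n : ℝ) ^ 2) * Real.exp ((n : ℝ) ^ 2) := by gcongr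
    _ = Real.exp (-K * (n : ℝ) ^ 2) := by rw [← Real.exp_add]; ring_nf

namespace MeasureTheory

theorem lintegral_fin_nat_prod_eq_pow {α : Type*} [MeasurableSpace α] {μ : Measure α}
    [SigmaFinite μ] {f : α → ℝ≥0∞} (hf : Measurable f) (n : ℕ) :
    ∫⁻ x : Fin n → α, ∏ i, f (x i) ∂(Measure.pi fun _ ↦ μ) = (∫⁻ x, f x ∂μ) ^ n := by
  induction n with
  | zero => simp
  | succ n ih =>
      calc
        _ = ∫⁻ x : α × (Fin n → α), f x.1 * ∏ i : Fin n, f (x.2 i)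
            ∂(μ.prod (Measure.pi fun _ ↦ μ)) := by
          rw [← ((measurePreserving_piFinSuccAbove (fun _ ↦ μ) 0).symm).lintegral_comp_emb
            (MeasurableEquiv.measurableEmbedding _)]
          simp [MeasurableEquiv.piFinSuccAbove_symm_apply, Fin.prod_univ_succ]
        _ = (∫⁻ x, f x ∂μ) ^ (n + 1) := by
          rw [lintegral_prod_mul (g := fun x : Fin n → α ↦ ∏ i, f (x i)) hf.aemeasurable
            (Finset.measurable_prod _ fun i _ ↦ hf.comp (measurable_pi_apply i)).aemeasurable,
            ih, pow_succ']

theorem lintegral_fintype_prod_eq_pow {ι α : Type*} [Fintype ι] [MeasurableSpace α]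
    {μ : Measure α} [SigmaFinite μ] {f : α → ℝ≥0∞} (hf : Measurable f) :
    ∫⁻ x : ι → α, ∏ i, f (x i) ∂(Measure.pi fun _ ↦ μ) = (∫⁻ x, f x ∂μ) ^ Fintype.card ι := by
  let e := (Fintype.equivFin ι).symm
  rw [← (measurePreserving_piCongrLeft (fun _ ↦ μ) e).lintegral_comp_emb
    (MeasurableEquiv.measurableEmbedding _)]
  simp_rw [← e.prod_comp, MeasurableEquiv.coe_piCongrLeft, Equiv.piCongrLeft_apply_apply]
  exact lintegral_fin_nat_prod_eq_pow hf _

theorem measure_pi_setOf_prod_le_le {ι α : Type*} [Fintype ι] [MeasurableSpace α] {μ : Measure α}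
    [SigmaFinite μ] {g : α → ℝ} (hg : Measurable g) {B : Set α} (hB : MeasurableSet B)
    {t l : ℝ} (ht : 0 < t) (hl : 0 < l) :
    Measure.pi (fun _ ↦ μ) {a : ι → α | ∏ i, g (a i) ≤ t ∧ ∀ i, a i ∈ B}
      ≤ ENNReal.ofReal t ^ l * (∫⁻ x in B, ENNReal.ofReal (g x) ^ (-l) ∂μ) ^ Fintype.card ι := by
  set f := B.indicator fun x ↦ ENNReal.ofReal (g x) ^ (-l)
  have hf : Measurable f := ((ENNReal.measurable_ofReal.comp hg).pow_const _).indicator hB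
  have hF : Measurable fun a : ι → α ↦ ∏ i, f (a i) :=
    Finset.measurable_prod _ fun i _ ↦ hf.comp (measurable_pi_apply i)
  have hc₀ : ENNReal.ofReal t ^ (-l) ≠ 0 := by simp [ENNReal.rpow_eq_zero_iff, hl.le]
  have hc₁ : ENNReal.ofReal t ^ (-l) ≠ ⊤ := by simp [ENNReal.rpow_eq_top_iff, ht, hl]
  have hsub : {a : ι → α | ∏ i, g (a i) ≤ t ∧ ∀ i, a i ∈ B}
      ⊆ {a | ENNReal.ofReal t ^ (-l) ≤ ∏ i, f (a i)} := by
    rintro a ⟨hprod, haB⟩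
    simp only [Set.mem_ofPred_eq, f, Set.indicator_of_mem (haB _)]
    rw [ENNReal.prod_rpow_of_ne_top fun _ _ ↦ ENNReal.ofReal_ne_top, ENNReal.rpow_neg, ENNReal.rpow_neg, ENNReal.inv_le_inv]
    gcongr
    exact (ENNReal.prod_ofReal_le_ofReal_prod _ _).trans (ENNReal.ofReal_le_ofReal hprod)
  calc _ ≤ Measure.pi (fun _ ↦ μ) {a | ENNReal.ofReal t ^ (-l) ≤ ∏ i, f (a i)} :=
        measure_mono hsub
    _ ≤ (∫⁻ a, ∏ i, f (a i) ∂Measure.pi fun _ ↦ μ) / ENNReal.ofReal t ^ (-l) :=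
        meas_ge_le_lintegral_div hF.aemeasurable hc₀ hc₁
    _ = _ := by
        rw [lintegral_fintype_prod_eq_pow hf, lintegral_indicator hB, div_eq_mul_inv,
          ENNReal.rpow_neg, inv_inv, mul_comm]

end MeasureTheory

theorem technical_lemma_complex_general (g : ℂ → ℝ) (hg_meas : Measurable g)
    (δ : ℝ)
    (hc : ∀ l : ℝ, 0 < l →
      ∫⁻ x in {x : ℂ | ‖x‖ ≤ δ}, ENNReal.ofReal (g x) ^ (-l) < ⊤) :
    ∀ K > (0 : ℝ), ∀ ε > (0 : ℝ), ∃ n₀ : ℕ, ∀ n > n₀,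
      volume {a : Fin (n + 1) → ℂ |
          (∏ k, g (a k)) ≤ Real.exp (-ε * (n : ℝ) ^ 2) ∧ ∀ k, ‖a k‖ < δ}
        ≤ ENNReal.ofReal (Real.exp (-K * (n : ℝ) ^ 2)) := by
  intro K hK ε hε
  have hl : 0 < (K + 1) / ε := by positivity
  obtain ⟨N, hN⟩ :=
    eventually_atTop.1 (ENNReal.eventually_ofReal_exp_mul_pow_le (hc _ hl).ne K)
  refine ⟨N, fun n hn ↦ ?_⟩
  calc _ ≤ Measure.pi (fun _ ↦ volume) {a : Fin (n + 1) → ℂ |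
          ∏ k, g (a k) ≤ Real.exp (-ε * (n : ℝ) ^ 2) ∧ ∀ k, a k ∈ {x : ℂ | ‖x‖ ≤ δ}} :=
        measure_mono fun a ha ↦ ⟨ha.1, fun k ↦ (ha.2 k).le⟩
    _ ≤ ENNReal.ofReal (Real.exp (-ε * (n : ℝ) ^ 2)) ^ ((K + 1) / ε)
          * (∫⁻ x in {x : ℂ | ‖x‖ ≤ δ}, ENNReal.ofReal (g x) ^ (-((K + 1) / ε))) ^ (n + 1) := by
        simpa using measure_pi_setOf_prod_le_le (ι := Fin (n + 1)) (μ := volume) hg_meas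
          (measurableSet_le measurable_norm measurable_const) (Real.exp_pos _) hl
    _ = ENNReal.ofReal (Real.exp (-(K + 1) * (n : ℝ) ^ 2))
          * (∫⁻ x in {x : ℂ | ‖x‖ ≤ δ}, ENNReal.ofReal (g x) ^ (-((K + 1) / ε))) ^ (n + 1) := by
        rw [ENNReal.ofReal_rpow_of_pos (Real.exp_pos _), ← Real.exp_mul]
        field_simp
    _ ≤ _ := hN n hn.le

/-- Technical lemma (complex case): if `∫_{|x|≤δ} g(x)^{−λ} dℓ_ℂ(x) < ∞` for every `λ > 0`,
then for every `K > 0` and `ε > 0`, for all large `n`, the Lebesgue measure of the set of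
coefficient vectors `a ∈ ℂ^{n+1}` with `∏_k g(a_k) ≤ e^{−εn²}` and `max_k |a_k| < δ` is at
most `e^{−Kn²}`. -/
theorem technical_lemma_complex (g : ℂ → ℝ) (hg_meas : Measurable g)
    (hg_nonneg : ∀ x, 0 ≤ g x) (δ : ℝ) (hδ : 0 < δ)
    (hc : ∀ l : ℝ, 0 < l →
      ∫⁻ x in {x : ℂ | ‖x‖ ≤ δ}, ENNReal.ofReal (g x) ^ (-l) < ⊤) :
    ∀ K > (0 : ℝ), ∀ ε > (0 : ℝ), ∃ n₀ : ℕ, ∀ n > n₀,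
      volume {a : Fin (n + 1) → ℂ |
          (∏ k, g (a k)) ≤ Real.exp (-ε * (n : ℝ) ^ 2) ∧ ∀ k, ‖a k‖ < δ}
        ≤ ENNReal.ofReal (Real.exp (-K * (n : ℝ) ^ 2)) :=
  technical_lemma_complex_general g hg_meas δ hc
end

section
/- Let g : ℝ → [0,∞) be measurable and let δ > 0 be such that c(λ) := ∫ 1_{|x|≤δ} g(x)^{−λ} dℓ_ℝ(x) < ∞ for every λ > 0. Then for every K > 0 and ε > 0 there exists n₀ ∈ ℕ such that for all n > n₀, ∫_{ℝ^{n+1}} 1{∏_{k=0}^n g(a_k) ≤ e^{−εn²}} · 1{max_{0≤k≤n} |a_k| < δ} dℓ_{ℝ^{n+1}}(a_0,…,a_n) ≤ e^{−Kn²}. -/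
/-!
Chernoff bound: for `l > 0` put `f x = 1{|x| ≤ δ} g(x)^{-l}`, whose integral `c` is finite. On
the set in question `∏ f(a_k) ≥ e^{lεn²}`, so by Markov's inequality and Tonelli its measure is
at most `c^{n+1} e^{-lεn²}`. Taking `lε > K`, the factor `c^{n+1} = e^{O(n)}` is absorbed by
`e^{-(lε - K)n²}` for large `n`.
-/

open MeasureTheory Filter
open scoped ENNReal

namespace MeasureTheory

variable {α : Type*} [MeasurableSpace α] {μ : Measure α} [SigmaFinite μ] {f : α → ℝ≥0∞}

theorem lintegral_fin_prod_eq_pow (hf : Measurable f) (n : ℕ) :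
    ∫⁻ a : Fin n → α, ∏ k, f (a k) ∂Measure.pi (fun _ ↦ μ) = (∫⁻ x, f x ∂μ) ^ n := by
  induction n with
  | zero => simp [lintegral_const, Measure.pi_empty_univ]
  | succ n ih =>
    have hprod : Measurable fun b : Fin n → α ↦ ∏ k, f (b k) := by fun_prop
    rw [← ((measurePreserving_piFinSuccAbove (fun _ ↦ μ) 0).symm).lintegral_comp (by fun_prop)]
    simp only [MeasurableEquiv.piFinSuccAbove_symm_apply, Fin.insertNthEquiv,
      Fin.prod_univ_succ, Fin.insertNth_zero, Equiv.coe_fn_mk, Fin.cons_succ,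
      Fin.zero_succAbove, cast_eq, Fin.cons_zero]
    rw [lintegral_prod_mul hf.aemeasurable hprod.aemeasurable, ih, pow_succ, mul_comm]

theorem mul_pi_measure_le_lintegral_pow {n : ℕ} (hf : Measurable f) {s : Set (Fin n → α)}
    {t : ℝ≥0∞} (ht : ∀ a ∈ s, t ≤ ∏ k, f (a k)) :
    t * Measure.pi (fun _ ↦ μ) s ≤ (∫⁻ x, f x ∂μ) ^ n := by
  calc t * Measure.pi (fun _ ↦ μ) s
      ≤ t * Measure.pi (fun _ ↦ μ) {a | t ≤ ∏ k, f (a k)} := by gcongr; exact ht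
    _ ≤ ∫⁻ a, ∏ k, f (a k) ∂Measure.pi (fun _ ↦ μ) :=
        mul_meas_ge_le_lintegral₀
          (Finset.measurable_prod _ fun k _ ↦ hf.comp (measurable_pi_apply k)).aemeasurable t
    _ = (∫⁻ x, f x ∂μ) ^ n := lintegral_fin_prod_eq_pow hf n

end MeasureTheory

theorem ENNReal.ofReal_exp_mul_le_prod_rpow_neg {ι : Type*} (s : Finset ι) {u : ι → ℝ}
    (hu : ∀ i ∈ s, 0 ≤ u i) {l y : ℝ} (hl : 0 ≤ l) (h : ∏ i ∈ s, u i ≤ Real.exp (-y)) :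
    ENNReal.ofReal (Real.exp (l * y)) ≤ ∏ i ∈ s, ENNReal.ofReal (u i) ^ (-l) := by
  calc ENNReal.ofReal (Real.exp (l * y))
      = ENNReal.ofReal (Real.exp (-y)) ^ (-l) := by
        rw [ENNReal.ofReal_rpow_of_pos (Real.exp_pos _), ← Real.exp_mul]
        ring_nf
    _ ≤ ENNReal.ofReal (∏ i ∈ s, u i) ^ (-l) := by
        rw [ENNReal.rpow_neg, ENNReal.rpow_neg]
        exact ENNReal.inv_le_inv' (ENNReal.rpow_le_rpow (ENNReal.ofReal_le_ofReal h) hl)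
    _ = ∏ i ∈ s, ENNReal.ofReal (u i) ^ (-l) := by
        rw [ENNReal.ofReal_prod_of_nonneg hu,
          ENNReal.prod_rpow_of_ne_top fun _ _ ↦ ENNReal.ofReal_ne_top]

theorem Real.eventually_pow_mul_exp_neg_sq_le {C a K : ℝ} (hC : 0 ≤ C) (hKa : K < a) :
    ∀ᶠ n : ℕ in atTop, C ^ (n + 1) * Real.exp (-a * n ^ 2) ≤ Real.exp (-K * n ^ 2) := by
  have hL : 0 ≤ Real.log (C + 1) := Real.log_nonneg (by linarith)
  filter_upwards [eventually_ge_atTop 1, eventually_ge_atTop ⌈2 * Real.log (C + 1) / (a - K)⌉₊]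
    with n hn1 hnL
  have hn1 : (1 : ℝ) ≤ n := by exact_mod_cast hn1
  have hnL : 2 * Real.log (C + 1) ≤ (a - K) * n := by
    rw [← div_le_iff₀' (sub_pos.2 hKa)]; exact Nat.ceil_le.1 hnL
  calc C ^ (n + 1) * Real.exp (-a * n ^ 2)
      ≤ (C + 1) ^ (n + 1) * Real.exp (-a * n ^ 2) := by gcongr; linarith
    _ = Real.exp ((n + 1) * Real.log (C + 1) - a * n ^ 2) := by
        rw [← Real.rpow_natCast, Real.rpow_def_of_pos (by linarith), ← Real.exp_add]
        push_cast; ring_nf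
    _ ≤ Real.exp (-K * n ^ 2) := by
        gcongr
        nlinarith

theorem technical_lemma_real_general (g : ℝ → ℝ) (hg_meas : Measurable g)
    (hg_nonneg : ∀ x, 0 ≤ g x) (δ : ℝ)
    (hc : ∀ l : ℝ, 0 < l →
      ∫⁻ x in {x : ℝ | |x| ≤ δ}, ENNReal.ofReal (g x) ^ (-l) < ⊤) :
    ∀ K > (0 : ℝ), ∀ ε > (0 : ℝ), ∃ n₀ : ℕ, ∀ n > n₀,
      volume {a : Fin (n + 1) → ℝ |
          (∏ k, g (a k)) ≤ Real.exp (-ε * (n : ℝ) ^ 2) ∧ ∀ k, |a k| < δ}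
        ≤ ENNReal.ofReal (Real.exp (-K * (n : ℝ) ^ 2)) := by
  intro K _ ε hε
  set l := (K + 1) / ε
  have hl : 0 < l := by positivity
  have hlε : l * ε = K + 1 := div_mul_cancel₀ _ hε.ne'
  have hbox : MeasurableSet {x : ℝ | |x| ≤ δ} := measurableSet_le measurable_abs measurable_const
  set f : ℝ → ℝ≥0∞ := {x | |x| ≤ δ}.indicator fun x ↦ ENNReal.ofReal (g x) ^ (-l)
  have hf : Measurable f := (hg_meas.ennreal_ofReal.pow_const _).indicator hbox
  have hc_fin : ∫⁻ x, f x ≠ ⊤ := by rw [lintegral_indicator hbox]; exact (hc l hl).ne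
  obtain ⟨n₀, hn₀⟩ := eventually_atTop.1 <|
    Real.eventually_pow_mul_exp_neg_sq_le (C := (∫⁻ x, f x).toReal) ENNReal.toReal_nonneg
      (by linarith : K < l * ε)
  refine ⟨n₀, fun n hn ↦ ?_⟩
  have hchernoff := mul_pi_measure_le_lintegral_pow (μ := volume) (n := n + 1) hf
    (s := {a | (∏ k, g (a k)) ≤ Real.exp (-ε * (n : ℝ) ^ 2) ∧ ∀ k, |a k| < δ})
    (t := ENNReal.ofReal (Real.exp (l * (ε * n ^ 2)))) <| by
      rintro a ⟨hsmall, hlt⟩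
      rw [Finset.prod_congr rfl fun k _ ↦
        Set.indicator_of_mem (show a k ∈ {x | |x| ≤ δ} from (hlt k).le) _]
      exact ENNReal.ofReal_exp_mul_le_prod_rpow_neg _ (fun k _ ↦ hg_nonneg _) hl.le
        (by rwa [← neg_mul])
  calc volume _ ≤ (∫⁻ x, f x) ^ (n + 1) / ENNReal.ofReal (Real.exp (l * (ε * n ^ 2))) := by
        rw [ENNReal.le_div_iff_mul_le (by simp [Real.exp_pos]) (by simp), mul_comm]
        exact hchernoff
    _ = ENNReal.ofReal ((∫⁻ x, f x).toReal ^ (n + 1) * Real.exp (-(l * ε) * n ^ 2)) := by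
        rw [ENNReal.ofReal_mul (by positivity), ENNReal.ofReal_pow ENNReal.toReal_nonneg,
          ENNReal.ofReal_toReal hc_fin, div_eq_mul_inv,
          ← ENNReal.ofReal_inv_of_pos (Real.exp_pos _), ← Real.exp_neg]
        ring_nf
    _ ≤ ENNReal.ofReal (Real.exp (-K * n ^ 2)) := ENNReal.ofReal_le_ofReal (hn₀ n hn.le)

/-- Technical lemma (real case): if `∫_{|x|≤δ} g(x)^{−λ} dℓ_ℝ(x) < ∞` for every `λ > 0`,
then for every `K > 0` and `ε > 0`, for all large `n`, the Lebesgue measure of the set of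
coefficient vectors `a ∈ ℝ^{n+1}` with `∏_k g(a_k) ≤ e^{−εn²}` and `max_k |a_k| < δ` is at
most `e^{−Kn²}`. -/
theorem technical_lemma_real (g : ℝ → ℝ) (hg_meas : Measurable g)
    (hg_nonneg : ∀ x, 0 ≤ g x) (δ : ℝ) (hδ : 0 < δ)
    (hc : ∀ l : ℝ, 0 < l →
      ∫⁻ x in {x : ℝ | |x| ≤ δ}, ENNReal.ofReal (g x) ^ (-l) < ⊤) :
    ∀ K > (0 : ℝ), ∀ ε > (0 : ℝ), ∃ n₀ : ℕ, ∀ n > n₀,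
      volume {a : Fin (n + 1) → ℝ |
          (∏ k, g (a k)) ≤ Real.exp (-ε * (n : ℝ) ^ 2) ∧ ∀ k, |a k| < δ}
        ≤ ENNReal.ofReal (Real.exp (-K * (n : ℝ) ^ 2)) :=
  technical_lemma_real_general g hg_meas hg_nonneg δ hc
end

section
/- Let ρ > 0, r > 0, R > 0 and let g : ℂ → [0,∞) be measurable with g(x) ≤ exp(−r|x|^ρ + R) for all x ∈ ℂ. Then for every n ≥ 1 and every z = (z_1,…,z_n) ∈ ℂⁿ, ∫_ℂ (∏_{i<j} |z_i − z_j|²) |a|^{2n} ∏_{k=0}^n g(a·ã_k(z)) dℓ_ℂ(a) ≤ e^{(n+1)R} · (∏_{i<j} |z_i − z_j|² / ‖ã(z)‖_ρ^{2n+2}) · ∫_ℂ |u|^{2n} e^{−r|u|^ρ} dℓ_ℂ(u). -/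
/-!
With `S = ∑ₖ ‖ãₖ‖^ρ` and `N = S^(1/ρ)`, the tail bound and `‖a ãₖ‖^ρ = ‖a‖^ρ ‖ãₖ‖^ρ` give
`∏ₖ g(a ãₖ) ≤ e^{(n+1)R} e^{-r N^ρ ‖a‖^ρ}`. The substitution `u = N a` in the plane (Jacobian `N²`)
turns `∫ ‖a‖^{2n} e^{-r N^ρ ‖a‖^ρ}` into `N^{-(2n+2)} ∫ ‖u‖^{2n} e^{-r ‖u‖^ρ}`. Since `ã(z)` is the
coefficient vector of a monic polynomial, `S ≥ 1`, so `N > 0`.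
-/

open MeasureTheory Filter Polynomial
open scoped ENNReal

noncomputable section

/-- `ã(z)`: the coefficient vector of the monic polynomial `∏ (X − z_i)`. -/
def atil (n : ℕ) (z : Fin n → ℂ) : Fin (n + 1) → ℂ :=
  fun k => (∏ i, (Polynomial.X - Polynomial.C (z i))).coeff (k : ℕ)

/-- The squared Vandermonde factor `∏_{i<j} |z_i − z_j|²`. -/
def vand (n : ℕ) (z : Fin n → ℂ) : ℝ :=
  ∏ p ∈ Finset.univ.filter (fun p : Fin n × Fin n => p.1 < p.2),
    ‖z p.1 - z p.2‖ ^ 2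

theorem lintegral_comp_smul {E : Type*} [NormedAddCommGroup E] [NormedSpace ℝ E]
    [MeasurableSpace E] [BorelSpace E] [FiniteDimensional ℝ E] (μ : Measure E)
    [μ.IsAddHaarMeasure] (f : E → ℝ≥0∞) {c : ℝ} (hc : c ≠ 0) :
    ∫⁻ x, f (c • x) ∂μ = ENNReal.ofReal |(c ^ Module.finrank ℝ E)⁻¹| * ∫⁻ x, f x ∂μ := by
  calc ∫⁻ x, f (c • x) ∂μ = ∫⁻ x, f x ∂(μ.map (c • ·)) :=
        (lintegral_map_equiv f (MeasurableEquiv.smul₀ c hc)).symm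
    _ = _ := by rw [Measure.map_addHaar_smul μ hc, lintegral_smul_measure, smul_eq_mul]

theorem lintegral_norm_pow_mul_exp_mul_rpow (m : ℕ) (r ρ : ℝ) {c : ℝ} (hc : 0 < c) :
    ∫⁻ a : ℂ, ENNReal.ofReal (‖a‖ ^ m * Real.exp (-r * c ^ ρ * ‖a‖ ^ ρ)) =
      ENNReal.ofReal (1 / c ^ (m + 2)) *
        ∫⁻ u : ℂ, ENNReal.ofReal (‖u‖ ^ m * Real.exp (-r * ‖u‖ ^ ρ)) := by
  have hscale : ∀ a : ℂ, ‖a‖ ^ m * Real.exp (-r * c ^ ρ * ‖a‖ ^ ρ) =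
      1 / c ^ m * (‖c • a‖ ^ m * Real.exp (-r * ‖c • a‖ ^ ρ)) := by
    intro a
    rw [norm_smul, Real.norm_of_nonneg hc.le, Real.mul_rpow hc.le (norm_nonneg a), mul_pow]
    field_simp
  simp_rw [hscale, ENNReal.ofReal_mul (one_div_nonneg.2 (pow_nonneg hc.le m))]
  rw [lintegral_const_mul' _ _ ENNReal.ofReal_ne_top,
    lintegral_comp_smul volume (fun u : ℂ => ENNReal.ofReal (‖u‖ ^ m * Real.exp (-r * ‖u‖ ^ ρ)))
      hc.ne',
    Complex.finrank_real_complex, ← mul_assoc, ← ENNReal.ofReal_mul (by positivity),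
    abs_of_pos (by positivity)]
  congr 2
  field_simp
  ring

theorem prod_le_exp_of_le_exp {ι : Type*} [Fintype ι] {ρ r R : ℝ} {g : ℂ → ℝ}
    (hg_nonneg : ∀ x, 0 ≤ g x) (htail : ∀ x : ℂ, g x ≤ Real.exp (-r * ‖x‖ ^ ρ + R))
    (c : ι → ℂ) (a : ℂ) :
    ∏ k, g (a * c k) ≤
      Real.exp (Fintype.card ι * R) * Real.exp (-r * (∑ k, ‖c k‖ ^ ρ) * ‖a‖ ^ ρ) := by
  calc ∏ k, g (a * c k) ≤ ∏ k, Real.exp (-r * ‖a * c k‖ ^ ρ + R) :=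
        Finset.prod_le_prod (fun k _ => hg_nonneg _) (fun k _ => htail _)
    _ = _ := by
        have hsum : ∑ k, -r * ‖a * c k‖ ^ ρ = -r * (∑ k, ‖c k‖ ^ ρ) * ‖a‖ ^ ρ := by
          rw [Finset.mul_sum, Finset.sum_mul]
          refine Finset.sum_congr rfl fun k _ => ?_
          rw [norm_mul, Real.mul_rpow (norm_nonneg a) (norm_nonneg _)]
          ring
        rw [← Real.exp_sum, ← Real.exp_add, Finset.sum_add_distrib, hsum, Finset.sum_const,
          Finset.card_univ, nsmul_eq_mul, add_comm]

theorem atil_last (n : ℕ) (z : Fin n → ℂ) : atil n z (Fin.last n) = 1 := by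
  have hmonic : (∏ i, (X - C (z i))).Monic :=
    monic_prod_of_monic _ _ fun i _ => monic_X_sub_C (z i)
  have hdeg : (∏ i, (X - C (z i))).natDegree = n := by
    simp [natDegree_prod_of_monic _ _ fun i _ => monic_X_sub_C (z i)]
  simpa [atil, hdeg] using hmonic.coeff_natDegree

theorem one_le_sum_norm_atil_rpow (n : ℕ) (z : Fin n → ℂ) (ρ : ℝ) :
    1 ≤ ∑ k, ‖atil n z k‖ ^ ρ :=
  calc (1 : ℝ) = ‖atil n z (Fin.last n)‖ ^ ρ := by simp [atil_last]
    _ ≤ ∑ k, ‖atil n z k‖ ^ ρ :=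
        Finset.single_le_sum (f := fun k => ‖atil n z k‖ ^ ρ) (fun k _ => by positivity) (Finset.mem_univ _)

theorem vand_nonneg (n : ℕ) (z : Fin n → ℂ) : 0 ≤ vand n z :=
  Finset.prod_nonneg fun _ _ => by positivity

theorem density_upper_bound_rho_general (ρ r R : ℝ) (hρ : 0 < ρ)
    (g : ℂ → ℝ) (hg_nonneg : ∀ x, 0 ≤ g x)
    (htail : ∀ x : ℂ, g x ≤ Real.exp (-r * ‖x‖ ^ ρ + R))
    (n : ℕ) (z : Fin n → ℂ) :
    (∫⁻ a : ℂ, ENNReal.ofReal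
        (vand n z * ‖a‖ ^ (2 * n) * ∏ k, g (a * atil n z k)))
      ≤ ENNReal.ofReal (Real.exp ((n + 1 : ℝ) * R) *
          (vand n z /
            ((∑ k, ‖atil n z k‖ ^ ρ) ^ ((1 : ℝ) / ρ)) ^ (2 * n + 2))) *
        ∫⁻ u : ℂ, ENNReal.ofReal
          (‖u‖ ^ (2 * n) * Real.exp (-r * ‖u‖ ^ ρ)) := by
  set S := ∑ k, ‖atil n z k‖ ^ ρ
  have hS : 0 < S := one_pos.trans_le (one_le_sum_norm_atil_rpow n z ρ)
  set N := S ^ ((1 : ℝ) / ρ) with hNdef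
  have hN : 0 < N := Real.rpow_pos_of_pos hS _
  have hNρ : N ^ ρ = S := by rw [hNdef, one_div, Real.rpow_inv_rpow hS.le hρ.ne']
  have hv := vand_nonneg n z
  have hpointwise : ∀ a : ℂ,
      ENNReal.ofReal (vand n z * ‖a‖ ^ (2 * n) * ∏ k, g (a * atil n z k)) ≤
        ENNReal.ofReal (Real.exp ((n + 1 : ℝ) * R) * vand n z) *
          ENNReal.ofReal (‖a‖ ^ (2 * n) * Real.exp (-r * N ^ ρ * ‖a‖ ^ ρ)) := by
    intro a
    have hprod := prod_le_exp_of_le_exp hg_nonneg htail (atil n z) a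
    rw [Fintype.card_fin, Nat.cast_succ] at hprod
    rw [← ENNReal.ofReal_mul (by positivity), hNρ]
    refine ENNReal.ofReal_le_ofReal ?_
    calc vand n z * ‖a‖ ^ (2 * n) * ∏ k, g (a * atil n z k)
        ≤ vand n z * ‖a‖ ^ (2 * n) *
            (Real.exp ((n + 1 : ℝ) * R) * Real.exp (-r * S * ‖a‖ ^ ρ)) :=
          mul_le_mul_of_nonneg_left hprod (by positivity)
      _ = _ := by ring
  calc _ ≤ _ := lintegral_mono hpointwise
    _ = _ := by
        rw [lintegral_const_mul' _ _ ENNReal.ofReal_ne_top,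
          lintegral_norm_pow_mul_exp_mul_rpow (2 * n) r ρ hN, ← mul_assoc,
          ← ENNReal.ofReal_mul (by positivity)]
        congr 2
        ring

/-- Upper bound on the density of the zeros in terms of `‖ã(z)‖_ρ`. -/
theorem density_upper_bound_rho (ρ r R : ℝ) (hρ : 0 < ρ) (hr : 0 < r) (hR : 0 < R)
    (g : ℂ → ℝ) (hg_meas : Measurable g) (hg_nonneg : ∀ x, 0 ≤ g x)
    (htail : ∀ x : ℂ, g x ≤ Real.exp (-r * ‖x‖ ^ ρ + R))
    (n : ℕ) (hn : 1 ≤ n) (z : Fin n → ℂ) :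
    (∫⁻ a : ℂ, ENNReal.ofReal
        (vand n z * ‖a‖ ^ (2 * n) * ∏ k, g (a * atil n z k)))
      ≤ ENNReal.ofReal (Real.exp ((n + 1 : ℝ) * R) *
          (vand n z /
            ((∑ k, ‖atil n z k‖ ^ ρ) ^ ((1 : ℝ) / ρ)) ^ (2 * n + 2))) *
        ∫⁻ u : ℂ, ENNReal.ofReal
          (‖u‖ ^ (2 * n) * Real.exp (-r * ‖u‖ ^ ρ)) :=
  density_upper_bound_rho_general ρ r R hρ g hg_nonneg htail n z
end
end

section
/- Let ρ > 0, r > 0, R > 0 and let g : ℝ → [0,∞) be measurable with g(x) ≤ exp(−r|x|^ρ + R) for all x ∈ ℝ. Set γ_n = min(1, (n+1)^{1/ρ − 1/2}). Then for every n ≥ 1 and every z = (z_1,…,z_n) ∈ ℂⁿ whose multiset of entries is invariant under complex conjugation (so that ã(z) ∈ ℝ^{n+1}), ∫_ℝ |a|^n ∏_{k=0}^n g(a·ã_k(z)) dℓ_ℝ(a) ≤ e^{(n+1)R} · γ_n^{−(n+1)} · ‖ã(z)‖_2^{−(n+1)} · ∫_ℝ |u|^n e^{−r|u|^ρ} dℓ_ℝ(u).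 -/
/-!
Conjugation invariance of the roots makes `ã(z)` a real vector `b`, and `b_n = 1` since the
polynomial is monic, so `‖b‖₂ ≥ 1`. The comparison `‖b‖_ρ ≥ γ_n ‖b‖₂` (subadditivity of
`t ↦ t ^ (ρ/2)` when `ρ ≤ 2`, the power-mean inequality when `ρ ≥ 2`) turns the tail bound on `g`
into `∏ₖ g(a bₖ) ≤ e^{(n+1)R} e^{-r |c a|^ρ}` with `c = γ_n ‖b‖₂`, and the substitution `u = c a`
produces the factor `c^{-(n+1)}`.
-/

open MeasureTheory Polynomial
open scoped ENNReal

noncomputable section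

lemma Real.rpow_sum_le_sum_rpow {ι : Type*} (s : Finset ι) {f : ι → ℝ}
    (hf : ∀ i ∈ s, 0 ≤ f i) {p : ℝ} (hp : 0 < p) (hp1 : p ≤ 1) :
    (∑ i ∈ s, f i) ^ p ≤ ∑ i ∈ s, f i ^ p := by
  classical
  induction s using Finset.induction_on with
  | empty => simp [Real.zero_rpow hp.ne']
  | insert a s ha ih =>
    rw [Finset.sum_insert ha, Finset.sum_insert ha]
    have hs := fun i hi => hf i (Finset.mem_insert_of_mem hi)
    calc (f a + ∑ i ∈ s, f i) ^ p ≤ f a ^ p + (∑ i ∈ s, f i) ^ p :=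
          Real.rpow_add_le_add_rpow (hf a (Finset.mem_insert_self a s))
            (Finset.sum_nonneg hs) hp.le hp1
      _ ≤ f a ^ p + ∑ i ∈ s, f i ^ p := by gcongr; exact ih hs

section NormComparison

variable {ι : Type*} [Fintype ι] {ρ : ℝ}

lemma sq_rpow_half_eq_abs_rpow (x : ℝ) : (x ^ 2) ^ (ρ / 2) = |x| ^ ρ := by
  rw [← sq_abs, ← Real.rpow_natCast, ← Real.rpow_mul (abs_nonneg _)]
  norm_num [mul_div_cancel₀ ρ two_ne_zero]

lemma sum_sq_rpow_half_le_sum_abs_rpow (hρ : 0 < ρ) (hρ2 : ρ ≤ 2) (b : ι → ℝ) :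
    (∑ k, b k ^ 2) ^ (ρ / 2) ≤ ∑ k, |b k| ^ ρ := by
  simpa only [sq_rpow_half_eq_abs_rpow] using Real.rpow_sum_le_sum_rpow Finset.univ
    (fun k _ => sq_nonneg (b k)) (half_pos hρ) (by linarith)

lemma card_rpow_mul_sum_sq_rpow_half_le_sum_abs_rpow [Nonempty ι] (hρ2 : 2 ≤ ρ) (b : ι → ℝ) :
    (Fintype.card ι : ℝ) ^ (1 - ρ / 2) * (∑ k, b k ^ 2) ^ (ρ / 2) ≤ ∑ k, |b k| ^ ρ := by
  have h := Real.rpow_sum_le_const_mul_sum_rpow_of_nonneg Finset.univ (f := fun k => b k ^ 2)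
    (p := ρ / 2) (by linarith) (fun k _ => sq_nonneg _)
  simp only [sq_rpow_half_eq_abs_rpow, Finset.card_univ] at h
  have hN : (0 : ℝ) < Fintype.card ι := by exact_mod_cast Fintype.card_pos
  calc (Fintype.card ι : ℝ) ^ (1 - ρ / 2) * (∑ k, b k ^ 2) ^ (ρ / 2)
      ≤ (Fintype.card ι : ℝ) ^ (1 - ρ / 2) * ((Fintype.card ι : ℝ) ^ (ρ / 2 - 1) *
          ∑ k, |b k| ^ ρ) := by gcongr
    _ = ∑ k, |b k| ^ ρ := by
      rw [← mul_assoc, ← Real.rpow_add hN]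
      norm_num

lemma min_one_rpow_mul_sqrt_sum_sq_rpow_le_sum_abs_rpow [Nonempty ι] (hρ : 0 < ρ) (b : ι → ℝ) :
    (min 1 ((Fintype.card ι : ℝ) ^ (1 / ρ - 1 / 2)) * (∑ k, b k ^ 2) ^ (1 / 2 : ℝ)) ^ ρ
      ≤ ∑ k, |b k| ^ ρ := by
  set N : ℝ := (Fintype.card ι : ℝ)
  set γ := min 1 (N ^ (1 / ρ - 1 / 2))
  have hN : 0 < N := Nat.cast_pos.mpr Fintype.card_pos
  have hγ : 0 ≤ γ := le_min zero_le_one (Real.rpow_nonneg hN.le _)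
  have hS : 0 ≤ ∑ k, b k ^ 2 := Finset.sum_nonneg fun k _ => sq_nonneg (b k)
  rw [Real.mul_rpow hγ (Real.rpow_nonneg hS _), ← Real.rpow_mul hS, one_div_mul_eq_div]
  rcases le_total ρ 2 with hρ2 | hρ2
  · calc γ ^ ρ * (∑ k, b k ^ 2) ^ (ρ / 2) ≤ 1 * (∑ k, b k ^ 2) ^ (ρ / 2) := by
          gcongr
          exact Real.rpow_le_one hγ (min_le_left _ _) hρ.le
      _ ≤ ∑ k, |b k| ^ ρ := by
          rw [one_mul]
          exact sum_sq_rpow_half_le_sum_abs_rpow hρ hρ2 b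
  · calc γ ^ ρ * (∑ k, b k ^ 2) ^ (ρ / 2)
        ≤ (N ^ (1 / ρ - 1 / 2)) ^ ρ * (∑ k, b k ^ 2) ^ (ρ / 2) := by
          gcongr
          exact min_le_right _ _
      _ = N ^ (1 - ρ / 2) * (∑ k, b k ^ 2) ^ (ρ / 2) := by
          rw [← Real.rpow_mul hN.le]
          field_simp
      _ ≤ ∑ k, |b k| ^ ρ := card_rpow_mul_sum_sq_rpow_half_le_sum_abs_rpow hρ2 b

end NormComparison

lemma map_conj_multiset_prod_X_sub_C {s : Multiset ℂ} (hs : s.map (starRingEnd ℂ) = s) :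
    (s.map fun w => X - C w).prod.map (starRingEnd ℂ) = (s.map fun w => X - C w).prod := by
  conv_rhs => rw [← hs]
  simp [Polynomial.map_multiset_prod, Multiset.map_map]

namespace atil

lemma ofReal_re {n : ℕ} {z : Fin n → ℂ} (hz : (List.ofFn z : Multiset ℂ).map (starRingEnd ℂ) = List.ofFn z)
    (k : Fin (n + 1)) : ((atil n z k).re : ℂ) = atil n z k := by
  have hP : ∏ i, (X - C (z i)) = ((List.ofFn z : Multiset ℂ).map fun w => X - C w).prod := by
    rw [Finset.prod_eq_multiset_prod, ← Fin.univ_val_map, Multiset.map_map]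
    rfl
  refine Complex.conj_eq_iff_re.mp ?_
  rw [atil, ← Polynomial.coeff_map, hP, map_conj_multiset_prod_X_sub_C hz]

lemma last (n : ℕ) (z : Fin n → ℂ) : atil n z (Fin.last n) = 1 := by
  have hmonic : ∀ i ∈ Finset.univ, (X - C (z i)).Monic := fun i _ => monic_X_sub_C (z i)
  have hdeg : (∏ i, (X - C (z i))).natDegree = n := by
    simp [natDegree_prod_of_monic _ _ hmonic]
  simpa [atil, hdeg] using (monic_prod_of_monic _ _ hmonic).coeff_natDegree

lemma one_le_sum_re_sq (n : ℕ) (z : Fin n → ℂ) : 1 ≤ ∑ k, (atil n z k).re ^ 2 := by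
  simpa [last] using Finset.single_le_sum (f := fun k => (atil n z k).re ^ 2)
    (fun k _ => sq_nonneg _) (Finset.mem_univ (Fin.last n))

end atil

lemma Real.lintegral_comp_mul_left {c : ℝ} (hc : c ≠ 0) (f : ℝ → ℝ≥0∞) :
    ∫⁻ a, f (c * a) = ENNReal.ofReal |c⁻¹| * ∫⁻ u, f u := by
  rw [← smul_eq_mul, ← lintegral_smul_measure, ← Real.map_volume_mul_left hc]
  exact (lintegral_map_equiv f (MeasurableEquiv.mulLeft₀ c hc)).symm

lemma lintegral_abs_pow_mul_comp_mul_left {c : ℝ} (hc : 0 < c) (m : ℕ) (f : ℝ → ℝ) :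
    ∫⁻ a, ENNReal.ofReal (|a| ^ m * f (c * a))
      = ENNReal.ofReal (c ^ (m + 1))⁻¹ * ∫⁻ u, ENNReal.ofReal (|u| ^ m * f u) := by
  have hscale : ∀ a : ℝ, |a| ^ m * f (c * a) = (c ^ m)⁻¹ * (|c * a| ^ m * f (c * a)) := by
    intro a
    rw [abs_mul, abs_of_pos hc, mul_pow, ← mul_assoc, ← mul_assoc,
      inv_mul_cancel₀ (pow_ne_zero m hc.ne'), one_mul]
  simp_rw [hscale, ENNReal.ofReal_mul (inv_nonneg.mpr (pow_nonneg hc.le m))]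
  rw [lintegral_const_mul' _ _ ENNReal.ofReal_ne_top,
    Real.lintegral_comp_mul_left hc.ne' (fun u => ENNReal.ofReal (|u| ^ m * f u)), ← mul_assoc,
    ← ENNReal.ofReal_mul (by positivity), abs_of_pos (inv_pos.mpr hc), ← mul_inv, ← pow_succ]

section TailBound

variable {ι : Type*} [Fintype ι] {ρ r R : ℝ} {g : ℝ → ℝ}

lemma prod_le_exp_mul_exp_of_rpow_le (hr : 0 ≤ r) (hg_nonneg : ∀ x, 0 ≤ g x)
    (htail : ∀ x, g x ≤ Real.exp (-r * |x| ^ ρ + R)) {b : ι → ℝ} {c : ℝ} (hc : 0 ≤ c)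
    (hcb : c ^ ρ ≤ ∑ k, |b k| ^ ρ) (a : ℝ) :
    ∏ k, g (a * b k) ≤ Real.exp (Fintype.card ι * R) * Real.exp (-r * |c * a| ^ ρ) := by
  have hsum : |c * a| ^ ρ ≤ ∑ k, |a * b k| ^ ρ := by
    simp_rw [abs_mul, Real.mul_rpow (abs_nonneg _) (abs_nonneg _), abs_of_nonneg hc,
      ← Finset.mul_sum, mul_comm (c ^ ρ)]
    gcongr
  calc ∏ k, g (a * b k) ≤ ∏ k, Real.exp (-r * |a * b k| ^ ρ + R) :=
        Finset.prod_le_prod (fun k _ => hg_nonneg _) (fun k _ => htail _)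
    _ = Real.exp (Fintype.card ι * R - r * ∑ k, |a * b k| ^ ρ) := by
        rw [← Real.exp_sum, Finset.sum_add_distrib, Finset.sum_const, Finset.card_univ,
          nsmul_eq_mul, Finset.mul_sum, sub_eq_neg_add, ← Finset.sum_neg_distrib]
        simp only [neg_mul, add_comm]
    _ ≤ Real.exp (Fintype.card ι * R - r * |c * a| ^ ρ) := by gcongr
    _ = Real.exp (Fintype.card ι * R) * Real.exp (-r * |c * a| ^ ρ) := by
        rw [sub_eq_add_neg, ← neg_mul, Real.exp_add]

lemma lintegral_abs_pow_mul_prod_le (hr : 0 ≤ r) (hg_nonneg : ∀ x, 0 ≤ g x)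
    (htail : ∀ x, g x ≤ Real.exp (-r * |x| ^ ρ + R)) {b : ι → ℝ} {c : ℝ} (hc : 0 < c)
    (hcb : c ^ ρ ≤ ∑ k, |b k| ^ ρ) (m : ℕ) :
    ∫⁻ a, ENNReal.ofReal (|a| ^ m * ∏ k, g (a * b k))
      ≤ ENNReal.ofReal (Real.exp (Fintype.card ι * R) * (c ^ (m + 1))⁻¹) *
        ∫⁻ u, ENNReal.ofReal (|u| ^ m * Real.exp (-r * |u| ^ ρ)) := by
  set E := Real.exp (Fintype.card ι * R)
  have hE : 0 ≤ E := Real.exp_nonneg _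
  calc ∫⁻ a, ENNReal.ofReal (|a| ^ m * ∏ k, g (a * b k))
      ≤ ∫⁻ a, ENNReal.ofReal (|a| ^ m * (E * Real.exp (-r * |c * a| ^ ρ))) := by
        gcongr with a
        exact prod_le_exp_mul_exp_of_rpow_le hr hg_nonneg htail hc.le hcb a
    _ = ENNReal.ofReal E * ∫⁻ a, ENNReal.ofReal (|a| ^ m * Real.exp (-r * |c * a| ^ ρ)) := by
        simp_rw [mul_left_comm _ E, ENNReal.ofReal_mul hE]
        exact lintegral_const_mul' _ _ ENNReal.ofReal_ne_top
    _ = _ := by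
        rw [lintegral_abs_pow_mul_comp_mul_left hc m (fun u => Real.exp (-r * |u| ^ ρ)),
          ← mul_assoc, ← ENNReal.ofReal_mul hE]

end TailBound

theorem density_upper_bound_real_general (ρ r R : ℝ) (hρ : 0 < ρ) (hr : 0 < r)
    (g : ℝ → ℝ) (hg_nonneg : ∀ x, 0 ≤ g x)
    (htail : ∀ x : ℝ, g x ≤ Real.exp (-r * |x| ^ ρ + R))
    (n : ℕ) (z : Fin n → ℂ)
    (hconj : Multiset.map (fun w : ℂ => (starRingEnd ℂ) w) (↑(List.ofFn z) : Multiset ℂ)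
      = (↑(List.ofFn z) : Multiset ℂ)) :
    (∫⁻ a : ℝ, ENNReal.ofReal (|a| ^ n * ∏ k, g (a * (atil n z k).re)))
      ≤ ENNReal.ofReal (Real.exp ((n + 1 : ℝ) * R) *
          ((min 1 (((n : ℝ) + 1) ^ ((1 : ℝ) / ρ - 1 / 2))) ^ (n + 1))⁻¹ *
          (((∑ k, ‖atil n z k‖ ^ 2) ^ ((1 : ℝ) / 2)) ^ (n + 1))⁻¹) *
        ∫⁻ u : ℝ, ENNReal.ofReal (|u| ^ n * Real.exp (-r * |u| ^ ρ)) := by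
  set b : Fin (n + 1) → ℝ := fun k => (atil n z k).re
  have hnorm : ∑ k, ‖atil n z k‖ ^ 2 = ∑ k, b k ^ 2 := by
    refine Finset.sum_congr rfl fun k _ => ?_
    rw [← atil.ofReal_re hconj k, Complex.norm_real, Real.norm_eq_abs, sq_abs]
  have hcard : ((n : ℝ) + 1) = Fintype.card (Fin (n + 1)) := by simp
  set γ := min 1 (((n : ℝ) + 1) ^ ((1 : ℝ) / ρ - 1 / 2))
  set c := γ * (∑ k, b k ^ 2) ^ (1 / 2 : ℝ)
  have hc : 0 < c := mul_pos (lt_min one_pos (by positivity))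
    (Real.rpow_pos_of_pos (one_pos.trans_le (atil.one_le_sum_re_sq n z)) _)
  have hcb : c ^ ρ ≤ ∑ k, |b k| ^ ρ := by
    simpa only [γ, c, hcard] using min_one_rpow_mul_sqrt_sum_sq_rpow_le_sum_abs_rpow hρ b
  convert lintegral_abs_pow_mul_prod_le hr.le hg_nonneg htail hc hcb n using 3
  rw [hnorm, hcard, mul_pow, mul_inv, mul_assoc]

/-- Upper bound on the (real-coefficients) density of the zeros in terms of the Euclidean
norm `‖ã(z)‖₂`, with comparison factor `γ_n = min(1, (n+1)^{1/ρ − 1/2})`, for a root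
configuration `z` whose multiset of entries is invariant under complex conjugation (so that
`ã(z)` has real entries). -/
theorem density_upper_bound_real (ρ r R : ℝ) (hρ : 0 < ρ) (hr : 0 < r) (hR : 0 < R)
    (g : ℝ → ℝ) (hg_meas : Measurable g) (hg_nonneg : ∀ x, 0 ≤ g x)
    (htail : ∀ x : ℝ, g x ≤ Real.exp (-r * |x| ^ ρ + R))
    (n : ℕ) (hn : 1 ≤ n) (z : Fin n → ℂ)
    (hconj : Multiset.map (fun w : ℂ => (starRingEnd ℂ) w) (↑(List.ofFn z) : Multiset ℂ)
      = (↑(List.ofFn z) : Multiset ℂ)) :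
    (∫⁻ a : ℝ, ENNReal.ofReal (|a| ^ n * ∏ k, g (a * (atil n z k).re)))
      ≤ ENNReal.ofReal (Real.exp ((n + 1 : ℝ) * R) *
          ((min 1 (((n : ℝ) + 1) ^ ((1 : ℝ) / ρ - 1 / 2))) ^ (n + 1))⁻¹ *
          (((∑ k, ‖atil n z k‖ ^ 2) ^ ((1 : ℝ) / 2)) ^ (n + 1))⁻¹) *
        ∫⁻ u : ℝ, ENNReal.ofReal (|u| ^ n * Real.exp (-r * |u| ^ ρ)) :=
  density_upper_bound_real_general ρ r R hρ hr g hg_nonneg htail n z hconj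
end
end
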